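/- The petrified program P_β(prog) is 1-safe: every reachable marking assigns at most one token to each place. -/
import Mathlib


/-! Places of the petrified program, markings, and coherence. -/

/-- Places: program control locations `⟨X, θ, k⟩` (with instance ID `⊥` encoded as `none`),
auxiliary places `inUse(θ,k)` and `notInUse(θ,k)`, and places `insuff(θ)`. -/
inductive APlace (C T : Type) (β : ℕ) where
  | loc : C → T → Option (Fin β) → APlace C T β
  | inUse : T → Fin β → APlace C T β
  | notInUse : T → Fin β → APlace C T β
  | insuff : T → APlace C T β
deriving DecidableEq

/-- Coherence of a marking `m : P → ℕ`:
for every template `θ` and instance ID `k`,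
`m(inUse(θ,k)) + m(notInUse(θ,k)) + m(insuff(θ)) = 1`;
`m(inUse(θ,k)) > 0` iff some program location place `⟨X,θ,k⟩` has a token; and
the sum of tokens over all program location places with the same `θ` and `k'` is at most 1. -/
def Coherent {C T : Type} {β : ℕ} [Fintype C] (m : APlace C T β → ℕ) : Prop :=
  (∀ (θ : T) (k : Fin β),
      m (.inUse θ k) + m (.notInUse θ k) + m (.insuff θ) = 1) ∧
  (∀ (θ : T) (k : Fin β),
      0 < m (.inUse θ k) ↔ ∃ X : C, 0 < m (.loc X θ (some k))) ∧
  (∀ (θ : T) (k' : Option (Fin β)), ∑ X : C, m (.loc X θ k') ≤ 1)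

/-- The transitions of the petrified program `P_β(prog)`, given as pairs of a
pre-multiset and a post-multiset of places. Here `body : T → C` gives the body of each
thread template and `halt : C` is the terminated remainder program `Ω`. -/
inductive ATrans {C T : Type} {β : ℕ} [DecidableEq C] [DecidableEq T]
    (body : T → C) (halt : C) :
    Multiset (APlace C T β) → Multiset (APlace C T β) → Prop where
  | localStep (X Y : C) (θ : T) (k : Option (Fin β)) :
      ATrans body halt {.loc X θ k} {.loc Y θ k}
  | fork (X Y : C) (θ : T) (k : Option (Fin β)) (θ' : T) (k' : Fin β) :
      ATrans body halt
        (({.loc X θ k, .notInUse θ' k'} : Multiset (APlace C T β)) +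
          (Finset.Iio k').val.map (APlace.inUse θ'))
        (({.loc Y θ k, .loc (body θ') θ' (some k'), .inUse θ' k'} : Multiset (APlace C T β)) +
          (Finset.Iio k').val.map (APlace.inUse θ'))
  | insufficiency (X : C) (θ : T) (k : Option (Fin β)) (θ' : T) :
      ATrans body halt
        (({.loc X θ k} : Multiset (APlace C T β)) +
          (Finset.univ : Finset (Fin β)).val.map (APlace.inUse θ'))
        {.insuff θ'}
  | join (X Y : C) (θ : T) (k : Option (Fin β)) (θ' : T) (k' : Fin β) :
      ATrans body halt
        {.loc X θ k, .loc halt θ' (some k'), .inUse θ' k'}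
        {.loc Y θ k, .notInUse θ' k'}

/-- `m ⟶ m'` by firing some transition of the petrified program. -/
def AFire {C T : Type} {β : ℕ} [DecidableEq C] [DecidableEq T]
    (body : T → C) (halt : C) (m m' : APlace C T β → ℕ) : Prop :=
  ∃ pre post, ATrans body halt pre post ∧ (∀ p, pre.count p ≤ m p) ∧
    ∀ p, m' p = m p - pre.count p + post.count p

/-- The initial marking of the petrified program: one token in `⟨body(main), main, ⊥⟩`
and one token in each `notInUse(θ,k)`. -/
def ainit {C T : Type} {β : ℕ} [DecidableEq C] [DecidableEq T]
    (body : T → C) (main : T) : APlace C T β → ℕ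
  | .loc X θ k => if X = body main ∧ θ = main ∧ k = none then 1 else 0
  | .notInUse _ _ => 1
  | .inUse _ _ => 0
  | .insuff _ => 0

/-- Reachable markings of the petrified program. -/
inductive AReach {C T : Type} {β : ℕ} [DecidableEq C] [DecidableEq T]
    (body : T → C) (halt : C) (main : T) : (APlace C T β → ℕ) → Prop where
  | init : AReach body halt main (ainit body main)
  | step {m m'} : AReach body halt main m → AFire body halt m m' → AReach body halt main m'

section onesafeaux
variable {C T : Type} {β : ℕ} [DecidableEq C] [DecidableEq T]

variable {C T : Type} {β : ℕ} [DecidableEq C] [DecidableEq T]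

lemma count_map_inUse_inUse (θ' θ₀ : T) (j : Fin β) (s : Finset (Fin β)) :
    ((s.val.map (APlace.inUse θ') : Multiset (APlace C T β))).count (.inUse θ₀ j) =
      if θ₀ = θ' ∧ j ∈ s then 1 else 0 := by
  rw [Multiset.count_map]
  rcases eq_or_ne θ₀ θ' with rfl | hθ
  · simp only [APlace.inUse.injEq, true_and]
    rw [← Multiset.count_eq_card_filter_eq]
    by_cases hj : j ∈ s
    · rw [if_pos hj, Multiset.count_eq_one_of_mem s.nodup hj]
    · rw [if_neg hj, Multiset.count_eq_zero_of_notMem hj]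
  · simp only [APlace.inUse.injEq, hθ, false_and, if_neg, if_false]
    rw [Multiset.filter_eq_nil.2 (by simp [hθ])]
    simp

lemma count_map_inUse_other (θ' : T) (s : Finset (Fin β)) {p : APlace C T β}
    (hp : ∀ j, p ≠ APlace.inUse θ' j) : (s.val.map (APlace.inUse θ')).count p = 0 := by
  apply Multiset.count_eq_zero_of_notMem
  intro hmem
  obtain ⟨a, _, ha⟩ := Multiset.mem_map.1 hmem
  exact hp a ha.symm

@[simp] lemma count_map_inUse_loc (θ' : T) (s : Finset (Fin β)) (Z : C) (θ₀ : T)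
    (k₀ : Option (Fin β)) : (s.val.map (APlace.inUse θ')).count (.loc Z θ₀ k₀) = 0 :=
  count_map_inUse_other θ' s (by intro j h; cases h)

@[simp] lemma count_map_inUse_notInUse (θ' : T) (s : Finset (Fin β)) (θ₀ : T) (j : Fin β) :
    ((s.val.map (APlace.inUse θ') : Multiset (APlace C T β))).count (.notInUse θ₀ j) = 0 :=
  count_map_inUse_other θ' s (by intro j h; cases h)

@[simp] lemma count_map_inUse_insuff (θ' : T) (s : Finset (Fin β)) (θ₀ : T) :
    ((s.val.map (APlace.inUse θ') : Multiset (APlace C T β))).count (.insuff θ₀) = 0 :=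
  count_map_inUse_other θ' s (by intro j h; cases h)


/-- The auxiliary invariant used to prove 1-safety. -/
def PInv (m : APlace C T β → ℕ) : Prop :=
  (∀ (θ : T) (k : Fin β), m (.inUse θ k) + m (.notInUse θ k) + m (.insuff θ) = 1) ∧
  (∀ (θ : T) (k : Fin β) (Z : C), 0 < m (.notInUse θ k) → m (.loc Z θ (some k)) = 0) ∧
  (∀ (θ : T) (k' : Option (Fin β)) (Z : C), m (.loc Z θ k') ≤ 1) ∧
  (∀ (θ : T) (k' : Option (Fin β)) (Z Z' : C),
      0 < m (.loc Z θ k') → 0 < m (.loc Z' θ k') → Z = Z') ∧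
  (β = 0 → ∀ (Z Z' : C) (θ₀ θ₀' : T) (k₀ k₀' : Option (Fin β)),
      0 < m (.loc Z θ₀ k₀) → 0 < m (.loc Z' θ₀' k₀') → Z = Z' ∧ θ₀ = θ₀' ∧ k₀ = k₀') ∧
  (β = 0 → ∀ θ₁ : T, 0 < m (.insuff θ₁) →
      ∀ (Z : C) (θ₀ : T) (k₀ : Option (Fin β)), m (.loc Z θ₀ k₀) = 0) ∧
  (∀ θ : T, m (.insuff θ) ≤ 1)

lemma swap_group {m m' : APlace C T β → ℕ} {X Y : C} {θ : T} {k : Option (Fin β)}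
    (hX : 1 ≤ m (.loc X θ k))
    (h3 : ∀ Z, m (.loc Z θ k) ≤ 1)
    (h4 : ∀ Z Z', 0 < m (.loc Z θ k) → 0 < m (.loc Z' θ k) → Z = Z')
    (e : ∀ Z, m' (.loc Z θ k) =
      m (.loc Z θ k) - (if Z = X then 1 else 0) + (if Z = Y then 1 else 0)) :
    ∀ Z, m' (.loc Z θ k) = if Z = Y then 1 else 0 := by
  have hX1 : m (.loc X θ k) = 1 := le_antisymm (h3 X) hX
  have h0 : ∀ Z, Z ≠ X → m (.loc Z θ k) = 0 := by
    intro Z hZ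
    by_contra hne
    exact hZ (h4 Z X (Nat.pos_of_ne_zero hne) (by omega))
  intro Z
  rcases eq_or_ne Z X with rfl | hZX
  · rw [e, if_pos rfl, hX1]
    split_ifs <;> omega
  · rw [e, if_neg hZX, h0 Z hZX]
    split_ifs <;> omega

set_option maxHeartbeats 1000000 in
lemma pinv_fire {body : T → C} {halt : C} {m m' : APlace C T β → ℕ}
    (h : PInv m) (hf : AFire body halt m m') : PInv m' := by
  obtain ⟨h1, h2, h3, h4, h5, h6, h7⟩ := h
  obtain ⟨pre, post, ht, hen, hm'⟩ := hf
  cases ht with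
  | localStep X Y θ k =>
    have henX : 1 ≤ m (.loc X θ k) := by simpa using hen (.loc X θ k)
    have eU : ∀ (θ₀ : T) (j : Fin β), m' (.inUse θ₀ j) = m (.inUse θ₀ j) := by
      intro θ₀ j; rw [hm']; simp [Multiset.count_singleton]
    have eN : ∀ (θ₀ : T) (j : Fin β), m' (.notInUse θ₀ j) = m (.notInUse θ₀ j) := by
      intro θ₀ j; rw [hm']; simp [-Fin.univ_val_map, Multiset.count_singleton]
    have eI : ∀ (θ₀ : T), m' (.insuff θ₀) = m (.insuff θ₀) := by
      intro θ₀; rw [hm']; simp [Multiset.count_singleton]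
    have eL : ∀ (Z : C) (θ₀ : T) (k₀ : Option (Fin β)), m' (.loc Z θ₀ k₀) =
        m (.loc Z θ₀ k₀) - (if Z = X ∧ θ₀ = θ ∧ k₀ = k then 1 else 0)
          + (if Z = Y ∧ θ₀ = θ ∧ k₀ = k then 1 else 0) := by
      intro Z θ₀ k₀; rw [hm']; simp [Multiset.count_singleton, APlace.loc.injEq]
    refine ⟨?_, ?_, ?_, ?_, ?_, ?_, ?_⟩
    · intro θ₀ j; rw [eU, eN, eI]; exact h1 θ₀ j
    · intro θ₀ j Z hpos
      rw [eN] at hpos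
      by_cases hk : θ₀ = θ ∧ (some j : Option (Fin β)) = k
      · exfalso
        obtain ⟨rfl, hk2⟩ := hk
        subst hk2
        have := h2 θ₀ j X hpos
        omega
      · have hz := h2 θ₀ j Z hpos
        rw [eL, hz, if_neg (fun h => hk ⟨h.2.1, h.2.2⟩), if_neg (fun h => hk ⟨h.2.1, h.2.2⟩)]
    · intro θ₀ k₀ Z
      by_cases hg : θ₀ = θ ∧ k₀ = k
      · obtain ⟨rfl, rfl⟩ := hg
        have hsw : ∀ W, m' (.loc W θ₀ k₀) = if W = Y then 1 else 0 :=
          swap_group henX (h3 θ₀ k₀) (h4 θ₀ k₀) (fun W => by rw [eL]; simp)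
        rw [hsw Z]; split_ifs <;> omega
      · rw [eL, if_neg (fun h => hg ⟨h.2.1, h.2.2⟩), if_neg (fun h => hg ⟨h.2.1, h.2.2⟩)]
        have := h3 θ₀ k₀ Z; omega
    · intro θ₀ k₀ Z Z' hZ hZ'
      by_cases hg : θ₀ = θ ∧ k₀ = k
      · obtain ⟨rfl, rfl⟩ := hg
        have hsw : ∀ W, m' (.loc W θ₀ k₀) = if W = Y then 1 else 0 :=
          swap_group henX (h3 θ₀ k₀) (h4 θ₀ k₀) (fun W => by rw [eL]; simp)
        have a1 : Z = Y := by by_contra hne; rw [hsw Z, if_neg hne] at hZ; omega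
        have a2 : Z' = Y := by by_contra hne; rw [hsw Z', if_neg hne] at hZ'; omega
        rw [a1, a2]
      · rw [eL, if_neg (fun h => hg ⟨h.2.1, h.2.2⟩), if_neg (fun h => hg ⟨h.2.1, h.2.2⟩)] at hZ hZ'
        exact h4 θ₀ k₀ Z Z' (by omega) (by omega)
    · intro hβ Z Z' θ₀ θ₀' k₀ k₀' hZ hZ'
      have key : ∀ (W : C) (θw : T) (kw : Option (Fin β)), 0 < m' (.loc W θw kw) →
          W = Y ∧ θw = θ ∧ kw = k := by
        intro W θw kw hW
        by_cases hc : W = Y ∧ θw = θ ∧ kw = k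
        · exact hc
        · exfalso
          rw [eL, if_neg hc] at hW
          have hWm : 0 < m (.loc W θw kw) := by split_ifs at hW <;> omega
          obtain ⟨rfl, rfl, rfl⟩ := h5 hβ W X θw θ kw k hWm henX
          have h3X := h3 θw kw W
          rw [if_pos ⟨rfl, rfl, rfl⟩] at hW
          omega
      obtain ⟨rfl, rfl, rfl⟩ := key Z θ₀ k₀ hZ
      obtain ⟨rfl, rfl, rfl⟩ := key Z' θ₀' k₀' hZ'
      exact ⟨rfl, rfl, rfl⟩
    · intro hβ θ₁ hpos Z θ₀ k₀
      rw [eI] at hpos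
      exact absurd (h6 hβ θ₁ hpos X θ k) (by omega)
    · intro θ₁; rw [eI]; exact h7 θ₁
  | fork X Y θ k θ' k' =>
    have henX : 1 ≤ m (.loc X θ k) := by simpa using hen (.loc X θ k)
    have henN : 1 ≤ m (.notInUse θ' k') := by
      have := hen (.notInUse θ' k')
      simpa [Multiset.insert_eq_cons, Multiset.count_cons, Multiset.count_singleton] using this
    have henU : ∀ j, j < k' → 1 ≤ m (.inUse θ' j) := by
      intro j hj
      have := hen (.inUse θ' j)
      simpa [Multiset.insert_eq_cons, Multiset.count_cons, Multiset.count_singleton,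
        count_map_inUse_inUse, Finset.mem_Iio, hj] using this
    have eU : ∀ (θ₀ : T) (j : Fin β), m' (.inUse θ₀ j) =
        m (.inUse θ₀ j) - (if θ₀ = θ' ∧ j < k' then 1 else 0)
          + ((if θ₀ = θ' ∧ j = k' then 1 else 0) + (if θ₀ = θ' ∧ j < k' then 1 else 0)) := by
      intro θ₀ j; rw [hm']
      simp only [Multiset.insert_eq_cons, Multiset.count_cons, Multiset.count_add,
        Multiset.count_singleton, count_map_inUse_inUse, count_map_inUse_loc,
        count_map_inUse_notInUse, count_map_inUse_insuff, Finset.mem_Iio,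
        APlace.inUse.injEq, APlace.loc.injEq, APlace.notInUse.injEq]
      simp only [reduceCtorEq, if_false]
      split_ifs <;> omega
    have eN : ∀ (θ₀ : T) (j : Fin β), m' (.notInUse θ₀ j) =
        m (.notInUse θ₀ j) - (if θ₀ = θ' ∧ j = k' then 1 else 0) := by
      intro θ₀ j; rw [hm']
      simp only [Multiset.insert_eq_cons, Multiset.count_cons, Multiset.count_add,
        Multiset.count_singleton, count_map_inUse_inUse, count_map_inUse_loc,
        count_map_inUse_notInUse, count_map_inUse_insuff, APlace.notInUse.injEq]
      simp only [reduceCtorEq, if_false]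
      split_ifs <;> omega
    have eI : ∀ (θ₀ : T), m' (.insuff θ₀) = m (.insuff θ₀) := by
      intro θ₀; rw [hm']
      simp [Multiset.insert_eq_cons, Multiset.count_cons, Multiset.count_singleton]
    have eL : ∀ (Z : C) (θ₀ : T) (k₀ : Option (Fin β)), m' (.loc Z θ₀ k₀) =
        m (.loc Z θ₀ k₀) - (if Z = X ∧ θ₀ = θ ∧ k₀ = k then 1 else 0)
          + ((if Z = Y ∧ θ₀ = θ ∧ k₀ = k then 1 else 0)
            + (if Z = body θ' ∧ θ₀ = θ' ∧ k₀ = some k' then 1 else 0)) := by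
      intro Z θ₀ k₀; rw [hm']
      simp only [Multiset.insert_eq_cons, Multiset.count_cons, Multiset.count_add,
        Multiset.count_singleton, count_map_inUse_inUse, count_map_inUse_loc,
        count_map_inUse_notInUse, count_map_inUse_insuff, APlace.loc.injEq]
      simp only [reduceCtorEq, if_false]
      split_ifs <;> omega
    have hzero' : ∀ Z, m (.loc Z θ' (some k')) = 0 := fun Z => h2 θ' k' Z henN
    have hne : ¬(θ = θ' ∧ k = some k') := by
      rintro ⟨rfl, rfl⟩
      exact absurd (hzero' X) (by omega)
    have hswap : ∀ W, m' (.loc W θ k) = if W = Y then 1 else 0 := by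
      refine swap_group henX (h3 θ k) (h4 θ k) (fun W => ?_)
      have hb : ¬(W = body θ' ∧ θ = θ' ∧ k = some k') := fun h => hne ⟨h.2.1, h.2.2⟩
      rw [eL, if_neg hb]
      simp
    have hfresh : ∀ W, m' (.loc W θ' (some k')) = if W = body θ' then 1 else 0 := by
      intro W
      have ha : ¬(W = X ∧ θ' = θ ∧ (some k' : Option (Fin β)) = k) :=
        fun h => hne ⟨h.2.1.symm, h.2.2.symm⟩
      have hb : ¬(W = Y ∧ θ' = θ ∧ (some k' : Option (Fin β)) = k) :=
        fun h => hne ⟨h.2.1.symm, h.2.2.symm⟩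
      rw [eL, hzero' W, if_neg ha, if_neg hb]
      simp
    have hoth : ∀ (W : C) (θ₀ : T) (k₀ : Option (Fin β)), ¬(θ₀ = θ ∧ k₀ = k) →
        ¬(θ₀ = θ' ∧ k₀ = some k') → m' (.loc W θ₀ k₀) = m (.loc W θ₀ k₀) := by
      intro W θ₀ k₀ hA hB
      have ha : ¬(W = X ∧ θ₀ = θ ∧ k₀ = k) := fun h => hA ⟨h.2.1, h.2.2⟩
      have hb : ¬(W = Y ∧ θ₀ = θ ∧ k₀ = k) := fun h => hA ⟨h.2.1, h.2.2⟩
      have hc : ¬(W = body θ' ∧ θ₀ = θ' ∧ k₀ = some k') := fun h => hB ⟨h.2.1, h.2.2⟩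
      rw [eL, if_neg ha, if_neg hb, if_neg hc]
      omega
    refine ⟨?_, ?_, ?_, ?_, ?_, ?_, ?_⟩
    · intro θ₀ j
      rw [eU, eN, eI]
      by_cases hθ : θ₀ = θ'
      · subst hθ
        by_cases hj : j = k'
        · subst hj
          have := h1 θ₀ j
          have := henN
          simp only [and_self, if_true, lt_irrefl, and_false, if_false]
          omega
        · by_cases hlt : j < k'
          · have := henU j hlt
            have := h1 θ₀ j
            simp only [hj, and_false, and_true, if_false, hlt, and_self, if_true]
            omega
          · have := h1 θ₀ j
            simp only [hj, hlt, and_false, if_false]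
            omega
      · have := h1 θ₀ j
        simp only [hθ, false_and, if_false]
        omega
    · intro θ₀ j Z hpos
      rw [eN] at hpos
      by_cases hc : θ₀ = θ' ∧ j = k'
      · exfalso
        have := h1 θ₀ j
        have := henN
        obtain ⟨rfl, rfl⟩ := hc
        rw [if_pos ⟨rfl, rfl⟩] at hpos
        omega
      · rw [if_neg hc, Nat.sub_zero] at hpos
        have hz := fun W => h2 θ₀ j W hpos
        by_cases hk : θ₀ = θ ∧ (some j : Option (Fin β)) = k
        · exfalso
          obtain ⟨rfl, hk2⟩ := hk
          subst hk2
          exact absurd (hz X) (by omega)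
        · have ha : ¬(Z = X ∧ θ₀ = θ ∧ (some j : Option (Fin β)) = k) :=
            fun h => hk ⟨h.2.1, h.2.2⟩
          have hb : ¬(Z = Y ∧ θ₀ = θ ∧ (some j : Option (Fin β)) = k) :=
            fun h => hk ⟨h.2.1, h.2.2⟩
          have hcc : ¬(Z = body θ' ∧ θ₀ = θ' ∧ (some j : Option (Fin β)) = some k') :=
            fun h => hc ⟨h.2.1, Option.some.inj h.2.2⟩
          rw [eL, hz Z, if_neg ha, if_neg hb, if_neg hcc]
    · intro θ₀ k₀ Z
      by_cases hg1 : θ₀ = θ ∧ k₀ = k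
      · rw [hg1.1, hg1.2, hswap Z]; split_ifs <;> omega
      · by_cases hg2 : θ₀ = θ' ∧ k₀ = some k'
        · rw [hg2.1, hg2.2, hfresh Z]; split_ifs <;> omega
        · rw [hoth Z θ₀ k₀ hg1 hg2]; exact h3 θ₀ k₀ Z
    · intro θ₀ k₀ Z Z' hZ hZ'
      by_cases hg1 : θ₀ = θ ∧ k₀ = k
      · rw [hg1.1, hg1.2] at hZ hZ'
        have a1 : Z = Y := by by_contra hne'; rw [hswap Z, if_neg hne'] at hZ; omega
        have a2 : Z' = Y := by by_contra hne'; rw [hswap Z', if_neg hne'] at hZ'; omega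
        rw [a1, a2]
      · by_cases hg2 : θ₀ = θ' ∧ k₀ = some k'
        · rw [hg2.1, hg2.2] at hZ hZ'
          have a1 : Z = body θ' := by by_contra hne'; rw [hfresh Z, if_neg hne'] at hZ; omega
          have a2 : Z' = body θ' := by by_contra hne'; rw [hfresh Z', if_neg hne'] at hZ'; omega
          rw [a1, a2]
        · rw [hoth Z θ₀ k₀ hg1 hg2] at hZ
          rw [hoth Z' θ₀ k₀ hg1 hg2] at hZ'
          exact h4 θ₀ k₀ Z Z' hZ hZ'
    · intro hβ; exact absurd k'.isLt (by omega)
    · intro hβ; exact absurd k'.isLt (by omega)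
    · intro θ₁; rw [eI]; exact h7 θ₁
  | insufficiency X θ k θ' =>
    have henX : 1 ≤ m (.loc X θ k) := by
      have := hen (.loc X θ k)
      simpa [-Fin.univ_val_map, Multiset.count_singleton] using this
    have henU : ∀ j : Fin β, 1 ≤ m (.inUse θ' j) := by
      intro j
      have := hen (.inUse θ' j)
      simpa [-Fin.univ_val_map, Multiset.count_singleton, count_map_inUse_inUse] using this
    have eU : ∀ (θ₀ : T) (j : Fin β), m' (.inUse θ₀ j) =
        m (.inUse θ₀ j) - (if θ₀ = θ' then 1 else 0) := by
      intro θ₀ j; rw [hm']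
      simp only [Multiset.count_add, Multiset.count_singleton, count_map_inUse_inUse,
        Finset.mem_univ, and_true, APlace.inUse.injEq]
      simp only [reduceCtorEq, if_false]
      split_ifs <;> omega
    have eN : ∀ (θ₀ : T) (j : Fin β), m' (.notInUse θ₀ j) = m (.notInUse θ₀ j) := by
      intro θ₀ j; rw [hm']; simp [-Fin.univ_val_map, Multiset.count_singleton]
    have eI : ∀ (θ₀ : T), m' (.insuff θ₀) =
        m (.insuff θ₀) + (if θ₀ = θ' then 1 else 0) := by
      intro θ₀; rw [hm']
      simp only [Multiset.count_add, Multiset.count_singleton, count_map_inUse_insuff,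
        APlace.insuff.injEq]
      simp only [reduceCtorEq, if_false]
      split_ifs <;> omega
    have eL : ∀ (Z : C) (θ₀ : T) (k₀ : Option (Fin β)), m' (.loc Z θ₀ k₀) =
        m (.loc Z θ₀ k₀) - (if Z = X ∧ θ₀ = θ ∧ k₀ = k then 1 else 0) := by
      intro Z θ₀ k₀; rw [hm']
      simp only [Multiset.count_add, Multiset.count_singleton, count_map_inUse_loc,
        APlace.loc.injEq]
      simp only [reduceCtorEq, if_false]
      split_ifs <;> omega
    have hI0 : m (.insuff θ') = 0 := by
      rcases Nat.eq_zero_or_pos β with hβ | hβ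
      · by_contra hne
        exact absurd (h6 hβ θ' (Nat.pos_of_ne_zero hne) X θ k) (by omega)
      · have := h1 θ' ⟨0, hβ⟩
        have := henU ⟨0, hβ⟩
        omega
    refine ⟨?_, ?_, ?_, ?_, ?_, ?_, ?_⟩
    · intro θ₀ j
      rw [eU, eN, eI]
      by_cases hθ : θ₀ = θ'
      · subst hθ
        have := h1 θ₀ j
        have := henU j
        simp only [eq_self_iff_true, if_true]
        omega
      · simp only [hθ, if_false]
        have := h1 θ₀ j
        omega
    · intro θ₀ j Z hpos
      rw [eN] at hpos
      have hz := fun W => h2 θ₀ j W hpos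
      by_cases hk : θ₀ = θ ∧ (some j : Option (Fin β)) = k
      · exfalso
        obtain ⟨rfl, hk2⟩ := hk
        subst hk2
        exact absurd (hz X) (by omega)
      · have ha : ¬(Z = X ∧ θ₀ = θ ∧ (some j : Option (Fin β)) = k) :=
          fun h => hk ⟨h.2.1, h.2.2⟩
        rw [eL, hz Z, if_neg ha]
    · intro θ₀ k₀ Z
      rw [eL]
      have := h3 θ₀ k₀ Z
      split_ifs <;> omega
    · intro θ₀ k₀ Z Z' hZ hZ'
      have hZm : 0 < m (.loc Z θ₀ k₀) := by rw [eL] at hZ; split_ifs at hZ <;> omega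
      have hZ'm : 0 < m (.loc Z' θ₀ k₀) := by rw [eL] at hZ'; split_ifs at hZ' <;> omega
      exact h4 θ₀ k₀ Z Z' hZm hZ'm
    · intro hβ Z Z' θ₀ θ₀' k₀ k₀' hZ hZ'
      have hZm : 0 < m (.loc Z θ₀ k₀) := by rw [eL] at hZ; split_ifs at hZ <;> omega
      have hZ'm : 0 < m (.loc Z' θ₀' k₀') := by rw [eL] at hZ'; split_ifs at hZ' <;> omega
      exact h5 hβ Z Z' θ₀ θ₀' k₀ k₀' hZm hZ'm
    · intro hβ θ₁ hpos Z θ₀ k₀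
      rw [eL]
      by_cases hx : Z = X ∧ θ₀ = θ ∧ k₀ = k
      · rw [if_pos hx, hx.1, hx.2.1, hx.2.2]
        have := h3 θ k X
        omega
      · rw [if_neg hx]
        have : m (.loc Z θ₀ k₀) = 0 := by
          by_contra hne'
          exact hx (h5 hβ Z X θ₀ θ k₀ k (Nat.pos_of_ne_zero hne') henX)
        omega
    · intro θ₁
      rw [eI]
      by_cases hθ : θ₁ = θ'
      · subst hθ; rw [hI0]; simp
      · simp only [hθ, if_false]
        have := h7 θ₁
        omega

  | join X Y θ k θ' k' =>
    by_cases hdup : (APlace.loc X θ k : APlace C T β) = .loc halt θ' (some k')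
    · exfalso
      injection hdup with a1 a2 a3
      subst a1; subst a2; subst a3
      have h := hen (.loc X θ (some k'))
      simp only [Multiset.insert_eq_cons, Multiset.count_cons, Multiset.count_singleton] at h
      simp at h
      have := h3 θ (some k') X
      omega
    · have hdup' : ¬(X = halt ∧ θ = θ' ∧ k = some k') := by
        rintro ⟨rfl, rfl, rfl⟩; exact hdup rfl
      have henX : 1 ≤ m (.loc X θ k) := by
        have h := hen (.loc X θ k)
        have hb : ¬(X = halt ∧ θ = θ' ∧ k = some k') := hdup'
        simp only [Multiset.insert_eq_cons, Multiset.count_cons, Multiset.count_singleton,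
          APlace.loc.injEq] at h
        simp only [reduceCtorEq, if_false] at h
        rw [if_neg hb] at h
        simp at h
        omega
      have henH : 1 ≤ m (.loc halt θ' (some k')) := by
        have h := hen (.loc halt θ' (some k'))
        have hb : ¬(halt = X ∧ θ' = θ ∧ (some k' : Option (Fin β)) = k) :=
          fun hh => hdup' ⟨hh.1.symm, hh.2.1.symm, hh.2.2.symm⟩
        simp only [Multiset.insert_eq_cons, Multiset.count_cons, Multiset.count_singleton,
          APlace.loc.injEq] at h
        simp only [reduceCtorEq, if_false] at h
        rw [if_neg hb] at h
        simp at h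
        omega
      have henU : 1 ≤ m (.inUse θ' k') := by
        have h := hen (.inUse θ' k')
        simpa [Multiset.insert_eq_cons, Multiset.count_cons, Multiset.count_singleton] using h
      have eU : ∀ (θ₀ : T) (j : Fin β), m' (.inUse θ₀ j) =
          m (.inUse θ₀ j) - (if θ₀ = θ' ∧ j = k' then 1 else 0) := by
        intro θ₀ j; rw [hm']
        simp only [Multiset.insert_eq_cons, Multiset.count_cons, Multiset.count_singleton,
          APlace.inUse.injEq]
        simp only [reduceCtorEq, if_false]
        split_ifs <;> omega
      have eN : ∀ (θ₀ : T) (j : Fin β), m' (.notInUse θ₀ j) =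
          m (.notInUse θ₀ j) + (if θ₀ = θ' ∧ j = k' then 1 else 0) := by
        intro θ₀ j; rw [hm']
        simp only [Multiset.insert_eq_cons, Multiset.count_cons, Multiset.count_singleton,
          APlace.notInUse.injEq]
        simp only [reduceCtorEq, if_false]
        split_ifs <;> omega
      have eI : ∀ (θ₀ : T), m' (.insuff θ₀) = m (.insuff θ₀) := by
        intro θ₀; rw [hm']
        simp [Multiset.insert_eq_cons, Multiset.count_cons, Multiset.count_singleton]
      have eL : ∀ (Z : C) (θ₀ : T) (k₀ : Option (Fin β)), m' (.loc Z θ₀ k₀) =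
          m (.loc Z θ₀ k₀) - ((if Z = X ∧ θ₀ = θ ∧ k₀ = k then 1 else 0)
            + (if Z = halt ∧ θ₀ = θ' ∧ k₀ = some k' then 1 else 0))
            + (if Z = Y ∧ θ₀ = θ ∧ k₀ = k then 1 else 0) := by
        intro Z θ₀ k₀; rw [hm']
        simp only [Multiset.insert_eq_cons, Multiset.count_cons, Multiset.count_singleton,
          APlace.loc.injEq]
        simp only [reduceCtorEq, if_false]
        split_ifs <;> omega
      by_cases hgrp : θ = θ' ∧ k = some k'
      · exfalso
        rcases hgrp with ⟨e1, e2⟩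
        rw [e1, e2] at henX
        exact hdup' ⟨h4 θ' (some k') X halt henX henH, e1, e2⟩
      · have hswap : ∀ W, m' (.loc W θ k) = if W = Y then 1 else 0 := by
          refine swap_group henX (h3 θ k) (h4 θ k) (fun W => ?_)
          have hb : ¬(W = halt ∧ θ = θ' ∧ k = some k') := fun h => hgrp ⟨h.2.1, h.2.2⟩
          rw [eL, if_neg hb]
          simp
        have hH1 : m (.loc halt θ' (some k')) = 1 := le_antisymm (h3 θ' (some k') halt) henH
        have hjz : ∀ W, m' (.loc W θ' (some k')) = 0 := by
          intro W
          have ha : ¬(W = X ∧ θ' = θ ∧ (some k' : Option (Fin β)) = k) :=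
            fun h => hgrp ⟨h.2.1.symm, h.2.2.symm⟩
          have hb : ¬(W = Y ∧ θ' = θ ∧ (some k' : Option (Fin β)) = k) :=
            fun h => hgrp ⟨h.2.1.symm, h.2.2.symm⟩
          rw [eL, if_neg ha, if_neg hb]
          by_cases hW : W = halt
          · subst hW
            rw [if_pos ⟨rfl, rfl, rfl⟩, hH1]
          · rw [if_neg (fun h => hW h.1)]
            have : m (.loc W θ' (some k')) = 0 := by
              by_contra hne'
              exact hW (h4 θ' (some k') W halt (Nat.pos_of_ne_zero hne') henH)
            omega
        have hoth : ∀ (W : C) (θ₀ : T) (k₀ : Option (Fin β)), ¬(θ₀ = θ ∧ k₀ = k) →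
            ¬(θ₀ = θ' ∧ k₀ = some k') → m' (.loc W θ₀ k₀) = m (.loc W θ₀ k₀) := by
          intro W θ₀ k₀ hA hB
          have ha : ¬(W = X ∧ θ₀ = θ ∧ k₀ = k) := fun h => hA ⟨h.2.1, h.2.2⟩
          have hb : ¬(W = Y ∧ θ₀ = θ ∧ k₀ = k) := fun h => hA ⟨h.2.1, h.2.2⟩
          have hc : ¬(W = halt ∧ θ₀ = θ' ∧ k₀ = some k') := fun h => hB ⟨h.2.1, h.2.2⟩
          rw [eL, if_neg ha, if_neg hb, if_neg hc]
          omega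
        refine ⟨?_, ?_, ?_, ?_, ?_, ?_, ?_⟩
        · intro θ₀ j
          rw [eU, eN, eI]
          by_cases hc : θ₀ = θ' ∧ j = k'
          · rw [if_pos hc, hc.1, hc.2]
            have := h1 θ' k'
            have := henU
            omega
          · rw [if_neg hc]
            have := h1 θ₀ j
            omega
        · intro θ₀ j Z hpos
          by_cases hc : θ₀ = θ' ∧ j = k'
          · rw [hc.1, hc.2]
            exact hjz Z
          · rw [eN, if_neg hc, add_zero] at hpos
            have hz := fun W => h2 θ₀ j W hpos
            by_cases hk : θ₀ = θ ∧ (some j : Option (Fin β)) = k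
            · exfalso
              obtain ⟨rfl, hk2⟩ := hk
              subst hk2
              exact absurd (hz X) (by omega)
            · have hb : ¬(θ₀ = θ' ∧ (some j : Option (Fin β)) = some k') :=
                fun h => hc ⟨h.1, Option.some.inj h.2⟩
              rw [hoth Z θ₀ (some j) hk hb]
              exact hz Z
        · intro θ₀ k₀ Z
          by_cases hg1 : θ₀ = θ ∧ k₀ = k
          · rw [hg1.1, hg1.2, hswap Z]; split_ifs <;> omega
          · by_cases hg2 : θ₀ = θ' ∧ k₀ = some k'
            · rw [hg2.1, hg2.2, hjz Z]; omega
            · rw [hoth Z θ₀ k₀ hg1 hg2]; exact h3 θ₀ k₀ Z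
        · intro θ₀ k₀ Z Z' hZ hZ'
          by_cases hg1 : θ₀ = θ ∧ k₀ = k
          · rw [hg1.1, hg1.2] at hZ hZ'
            have a1 : Z = Y := by by_contra hne'; rw [hswap Z, if_neg hne'] at hZ; omega
            have a2 : Z' = Y := by by_contra hne'; rw [hswap Z', if_neg hne'] at hZ'; omega
            rw [a1, a2]
          · by_cases hg2 : θ₀ = θ' ∧ k₀ = some k'
            · exfalso; rw [hg2.1, hg2.2, hjz Z] at hZ; omega
            · rw [hoth Z θ₀ k₀ hg1 hg2] at hZ
              rw [hoth Z' θ₀ k₀ hg1 hg2] at hZ'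
              exact h4 θ₀ k₀ Z Z' hZ hZ'
        · intro hβ; exact absurd k'.isLt (by omega)
        · intro hβ; exact absurd k'.isLt (by omega)
        · intro θ₁; rw [eI]; exact h7 θ₁


lemma pinv_init {body : T → C} {main : T} : PInv (ainit body main : APlace C T β → ℕ) := by
  have hloc : ∀ (Z : C) (θ₀ : T) (k₀ : Option (Fin β)),
      (ainit body main : APlace C T β → ℕ) (.loc Z θ₀ k₀) =
        if Z = body main ∧ θ₀ = main ∧ k₀ = none then 1 else 0 := fun _ _ _ => rfl
  refine ⟨?_, ?_, ?_, ?_, ?_, ?_, ?_⟩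
  · intro θ k; simp [ainit]
  · intro θ k Z _; rw [hloc]; simp
  · intro θ k' Z; rw [hloc]; split_ifs <;> omega
  · intro θ k' Z Z' hZ hZ'
    rw [hloc] at hZ hZ'
    split_ifs at hZ with c1
    · split_ifs at hZ' with c2
      · rw [c1.1, c2.1]
      · omega
    · omega
  · intro hβ Z Z' θ₀ θ₀' k₀ k₀' hZ hZ'
    rw [hloc] at hZ hZ'
    split_ifs at hZ with c1
    · split_ifs at hZ' with c2
      · exact ⟨c1.1.trans c2.1.symm, c1.2.1.trans c2.2.1.symm, c1.2.2.trans c2.2.2.symm⟩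
      · omega
    · omega
  · intro hβ θ₁ hpos
    simp [ainit] at hpos
  · intro θ; simp [ainit]


end onesafeaux

/-- the petrified program is 1-safe — every reachable marking assigns
at most one token to each place. -/
theorem petrified_one_safe {C T : Type} {β : ℕ} [Fintype C] [DecidableEq C] [DecidableEq T]
    (body : T → C) (halt : C) (main : T) (m : APlace C T β → ℕ)
    (h : AReach body halt main m) :
    ∀ p : APlace C T β, m p ≤ 1 := by
  have hinv : PInv m := by
    induction h with
    | init => exact pinv_init
    | step _ hf ih => exact pinv_fire ih hf
  obtain ⟨h1, _, h3, _, _, _, h7⟩ := hinv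
  intro p
  cases p with
  | loc Z θ k => exact h3 θ k Z
  | inUse θ k => have := h1 θ k; omega
  | notInUse θ k => have := h1 θ k; omega
  | insuff θ => exact h7 θ
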